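/- Let m and m* be two finite MDP models over the same finite state space S, finite action space A, and discount factor γ ∈ [0,1). Let π^b be any policy, let π_m^r be a rollout policy of π^b in m, let π_m^ce be a certainty-equivalence policy in m, and set Π = {π_m^r, π_m^ce}. If m is a performance-resembling model (PRM) of m* with respect to Π and J, then J_{m*}^{π_m^ce} ≥ J_{m*}^{π_m^r}. -/

import Mathlib

/-- A finite Markov decision process model over state space `S` and action space `A`:
a transition kernel `p`, a reward function `r`, and an initial state distribution `d`. -/
structure MDP (S A : Type) where
  p : S → A → PMF S
  r : S → A → S → ℝ
  d : PMF S

variable {S A : Type}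

/-- The expected one-step value `Σ_{s'} p(s,a)(s') (r(s,a,s') + γ V(s'))`. -/
noncomputable def expVal [Fintype S] (m : MDP S A) (γ : ℝ) (V : S → ℝ) (s : S) (a : A) : ℝ :=
  ∑ s' : S, (m.p s a s').toReal * (m.r s a s' + γ * V s')

/-- The Bellman evaluation operator `T_m^π` of policy `π` in model `m`. -/
noncomputable def bellman [Fintype S] [Fintype A] (m : MDP S A) (γ : ℝ)
    (π : S → PMF A) (V : S → ℝ) (s : S) : ℝ :=
  ∑ a : A, (π s a).toReal * expVal m γ V s a

/-- `V` is the value function `V_m^π`, i.e. a fixed point of the Bellman evaluation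
operator `T_m^π` (which is unique since `T_m^π` is a `γ`-contraction for `γ < 1`). -/
def IsValueFun [Fintype S] [Fintype A] (m : MDP S A) (γ : ℝ) (π : S → PMF A)
    (V : S → ℝ) : Prop :=
  ∀ s, bellman m γ π V s = V s

/-- The optimal Bellman operator `T_m^*`. -/
noncomputable def optBellman [Fintype S] [Fintype A] [Nonempty A] (m : MDP S A) (γ : ℝ)
    (V : S → ℝ) (s : S) : ℝ :=
  Finset.univ.sup' Finset.univ_nonempty (fun a : A => expVal m γ V s a)

/-- `V` is the optimal value function `V_m^*`, i.e. a fixed point of `T_m^*`. -/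
def IsOptValueFun [Fintype S] [Fintype A] [Nonempty A] (m : MDP S A) (γ : ℝ)
    (V : S → ℝ) : Prop :=
  ∀ s, optBellman m γ V s = V s

/-- The performance `J_m^π = Σ_s d(s) V_m^π(s)`, expressed via the value function `V` of `π`. -/
noncomputable def Jval [Fintype S] (m : MDP S A) (V : S → ℝ) : ℝ :=
  ∑ s : S, (m.d s).toReal * V s

/-- The deterministic (stochastic) policy induced by a map `S → A`. -/
noncomputable def detPol (f : S → A) : S → PMF A := fun s => PMF.pure (f s)

/-- A deterministic policy `g` is greedy with respect to the one-step values induced by `V`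
in model `m`: at each state it picks a maximizing action.  With `V = V_m^{π^b}` this says `g`
is a rollout policy of `π^b`; with `V = V_m^*` this says `g` is a certainty-equivalence policy. -/
def IsGreedyWrt [Fintype S] (m : MDP S A) (γ : ℝ) (V : S → ℝ) (g : S → A) : Prop :=
  ∀ s a, expVal m γ V s a ≤ expVal m γ V s (g s)

/-- `m` is a performance-contrasting model (PCM) of `mstar` w.r.t. a set `P` of policies
and `J`: whenever `J_m^{πi} ≥ J_m^{πj}` for `πi, πj ∈ P`, we have `J_{m*}^{πi} ≤ J_{m*}^{πj}`. -/
def IsPCM [Fintype S] [Fintype A] (m mstar : MDP S A) (γ : ℝ)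
    (P : Set (S → PMF A)) : Prop :=
  ∀ πi ∈ P, ∀ πj ∈ P, ∀ Vi Vj Wi Wj : S → ℝ,
    IsValueFun m γ πi Vi → IsValueFun m γ πj Vj →
    IsValueFun mstar γ πi Wi → IsValueFun mstar γ πj Wj →
    Jval m Vi ≥ Jval m Vj → Jval mstar Wi ≤ Jval mstar Wj

/-- `m` is a performance-resembling model (PRM) of `mstar` w.r.t. a set `P` of policies
and `J`: whenever `J_m^{πi} ≥ J_m^{πj}` for `πi, πj ∈ P`, we have `J_{m*}^{πi} ≥ J_{m*}^{πj}`. -/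
def IsPRM [Fintype S] [Fintype A] (m mstar : MDP S A) (γ : ℝ)
    (P : Set (S → PMF A)) : Prop :=
  ∀ πi ∈ P, ∀ πj ∈ P, ∀ Vi Vj Wi Wj : S → ℝ,
    IsValueFun m γ πi Vi → IsValueFun m γ πj Vj →
    IsValueFun mstar γ πi Wi → IsValueFun mstar γ πj Wj →
    Jval m Vi ≥ Jval m Vj → Jval mstar Wi ≥ Jval mstar Wj

/-- A policy `π` is optimal in `m` if its value function coincides with `V_m^*`. -/
def IsOptimalIn [Fintype S] [Fintype A] [Nonempty A] (m : MDP S A) (γ : ℝ)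
    (π : S → PMF A) : Prop :=
  ∀ V Vstar : S → ℝ, IsValueFun m γ π V → IsOptValueFun m γ Vstar → ∀ s, V s = Vstar s

/-- `m` is a performance-minimizing model (PNM) of `mstar` w.r.t. `P` and `J`: a PCM such
that every policy in `P` optimal in `m` attains the worst possible performance in `mstar`. -/
def IsPNM [Fintype S] [Fintype A] [Nonempty A] (m mstar : MDP S A) (γ : ℝ)
    (P : Set (S → PMF A)) : Prop :=
  IsPCM m mstar γ P ∧
    ∀ π ∈ P, IsOptimalIn m γ π →
      ∀ (π' : S → PMF A) (W W' : S → ℝ),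
        IsValueFun mstar γ π W → IsValueFun mstar γ π' W' →
        Jval mstar W ≤ Jval mstar W'

/-- `m` is a performance-maximizing model (PXM) of `mstar` w.r.t. `P` and `J`: a PRM such
that every policy in `P` optimal in `m` attains the best possible performance in `mstar`. -/
def IsPXM [Fintype S] [Fintype A] [Nonempty A] (m mstar : MDP S A) (γ : ℝ)
    (P : Set (S → PMF A)) : Prop :=
  IsPRM m mstar γ P ∧
    ∀ π ∈ P, IsOptimalIn m γ π →
      ∀ (π' : S → PMF A) (W W' : S → ℝ),
        IsValueFun mstar γ π W → IsValueFun mstar γ π' W' →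
        Jval mstar W ≥ Jval mstar W'

/-!
The certainty-equivalence policy is greedy for `V_m^*`, so `V_m^*` is its value function in `m`.
For any policy `π`, `T_m^π V_m^* ≤ T_m^* V_m^* = V_m^*`, and since `T_m^π` is a monotone
`γ`-contraction, the comparison principle gives `V_m^π ≤ V_m^*`. Taking `π` to be the rollout
policy yields `J_m^{π_m^ce} ≥ J_m^{π_m^r}`, which the PRM property transfers to `m*`.
-/

namespace PMF

theorem sum_toReal_eq_one {α : Type} [Fintype α] (q : PMF α) : ∑ a, (q a).toReal = 1 := by
  have h : ∑ a, q a = 1 := by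
    rw [← tsum_fintype (L := SummationFilter.unconditional _)]
    exact q.tsum_coe
  rw [← ENNReal.toReal_sum fun a _ => q.apply_ne_top a, h, ENNReal.toReal_one]

theorem sum_toReal_mul_le {α : Type} [Fintype α] (q : PMF α) {f : α → ℝ} {C : ℝ}
    (h : ∀ a, f a ≤ C) : ∑ a, (q a).toReal * f a ≤ C :=
  calc ∑ a, (q a).toReal * f a ≤ ∑ a, (q a).toReal * C :=
        Finset.sum_le_sum fun a _ => mul_le_mul_of_nonneg_left (h a) ENNReal.toReal_nonneg
    _ = C := by rw [← Finset.sum_mul, q.sum_toReal_eq_one, one_mul]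

end PMF

section Bellman

variable [Fintype S] (m : MDP S A) {γ : ℝ}

theorem expVal_sub_le (hγ0 : 0 ≤ γ) {V W : S → ℝ} {C : ℝ} (h : ∀ s, V s - W s ≤ C)
    (s : S) (a : A) : expVal m γ V s a - expVal m γ W s a ≤ γ * C := by
  rw [expVal, expVal, ← Finset.sum_sub_distrib]
  calc _ = ∑ s', (m.p s a s').toReal * (γ * (V s' - W s')) :=
        Finset.sum_congr rfl fun s' _ => by ring
    _ ≤ γ * C := PMF.sum_toReal_mul_le _ fun s' => mul_le_mul_of_nonneg_left (h s') hγ0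

variable [Fintype A]

theorem bellman_sub_le (hγ0 : 0 ≤ γ) (π : S → PMF A) {V W : S → ℝ} {C : ℝ}
    (h : ∀ s, V s - W s ≤ C) (s : S) : bellman m γ π V s - bellman m γ π W s ≤ γ * C := by
  rw [bellman, bellman, ← Finset.sum_sub_distrib]
  calc _ = ∑ a, (π s a).toReal * (expVal m γ V s a - expVal m γ W s a) :=
        Finset.sum_congr rfl fun a _ => by ring
    _ ≤ γ * C := PMF.sum_toReal_mul_le _ fun a => expVal_sub_le m hγ0 h s a

theorem dist_bellman_le (hγ0 : 0 ≤ γ) (π : S → PMF A) (V W : S → ℝ) :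
    dist (bellman m γ π V) (bellman m γ π W) ≤ γ * dist V W := by
  have hVW : ∀ s, |V s - W s| ≤ dist V W := fun s => by
    simpa only [Real.dist_eq] using dist_le_pi_dist V W s
  refine (dist_pi_le_iff (by positivity)).2 fun s => ?_
  rw [Real.dist_eq, abs_sub_le_iff]
  exact ⟨bellman_sub_le m hγ0 π (fun s => (abs_sub_le_iff.1 (hVW s)).1) s,
    bellman_sub_le m hγ0 π (fun s => (abs_sub_le_iff.1 (hVW s)).2) s⟩

theorem contractingWith_bellman (hγ0 : 0 ≤ γ) (hγ1 : γ < 1) (π : S → PMF A) :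
    ContractingWith ⟨γ, hγ0⟩ (bellman m γ π) :=
  ⟨by exact_mod_cast hγ1, LipschitzWith.of_dist_le_mul (dist_bellman_le m hγ0 π)⟩

theorem exists_isValueFun (hγ0 : 0 ≤ γ) (hγ1 : γ < 1) (π : S → PMF A) :
    ∃ V, IsValueFun m γ π V :=
  have hT := contractingWith_bellman m hγ0 hγ1 π
  ⟨hT.fixedPoint _, fun s => congrFun hT.fixedPoint_isFixedPt s⟩

theorem IsValueFun.le_of_bellman_le (hγ0 : 0 ≤ γ) (hγ1 : γ < 1) {π : S → PMF A}
    {V U : S → ℝ} (hV : IsValueFun m γ π V) (hU : ∀ s, bellman m γ π U s ≤ U s) (s : S) :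
    V s ≤ U s := by
  have : Nonempty S := ⟨s⟩
  obtain ⟨s₀, hs₀⟩ := Finite.exists_max fun s => V s - U s
  have hstep : V s₀ - U s₀ ≤ γ * (V s₀ - U s₀) := by
    have := bellman_sub_le m hγ0 π hs₀ s₀
    linarith [hV s₀, hU s₀]
  have hmax : V s₀ - U s₀ ≤ 0 := by nlinarith
  linarith [hs₀ s]

theorem bellman_le_optBellman [Nonempty A] (π : S → PMF A) (V : S → ℝ) (s : S) :
    bellman m γ π V s ≤ optBellman m γ V s :=
  PMF.sum_toReal_mul_le _ fun a => Finset.le_sup' (fun a => expVal m γ V s a) (Finset.mem_univ a)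

theorem IsValueFun.le_of_isOptValueFun [Nonempty A] (hγ0 : 0 ≤ γ) (hγ1 : γ < 1)
    {π : S → PMF A} {V Vstar : S → ℝ} (hV : IsValueFun m γ π V)
    (hVstar : IsOptValueFun m γ Vstar) (s : S) : V s ≤ Vstar s :=
  hV.le_of_bellman_le m hγ0 hγ1
    (fun s => (bellman_le_optBellman m π Vstar s).trans_eq (hVstar s)) s

theorem bellman_detPol (g : S → A) (V : S → ℝ) (s : S) :
    bellman m γ (detPol g) V s = expVal m γ V s (g s) := by
  classical
  simp [bellman, detPol, PMF.pure_apply, apply_ite ENNReal.toReal, ite_mul]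

theorem IsGreedyWrt.optBellman_eq [Nonempty A] {V : S → ℝ} {g : S → A}
    (hg : IsGreedyWrt m γ V g) (s : S) : optBellman m γ V s = expVal m γ V s (g s) :=
  le_antisymm (Finset.sup'_le _ _ fun a _ => hg s a) (Finset.le_sup' _ (Finset.mem_univ _))

theorem IsOptValueFun.isValueFun_detPol [Nonempty A] {V : S → ℝ} {g : S → A}
    (hV : IsOptValueFun m γ V) (hg : IsGreedyWrt m γ V g) : IsValueFun m γ (detPol g) V :=
  fun s => by rw [bellman_detPol, ← hg.optBellman_eq, hV s]

end Bellman

theorem Jval_mono [Fintype S] (m : MDP S A) {V W : S → ℝ} (h : ∀ s, V s ≤ W s) :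
    Jval m V ≤ Jval m W :=
  Finset.sum_le_sum fun s _ => mul_le_mul_of_nonneg_left (h s) ENNReal.toReal_nonneg

theorem prm_ce_ge_rollout_general
    {S A : Type} [Fintype S] [Fintype A] [Nonempty A]
    (m mstar : MDP S A) (γ : ℝ) (hγ0 : 0 ≤ γ) (hγ1 : γ < 1)
    -- rollout policy of `πb` in `m`
    (πr : S → A)
    -- optimal value function of `m` and a certainty-equivalence policy in `m`
    (Vstar : S → ℝ) (hVstar : IsOptValueFun m γ Vstar)
    (πce : S → A) (hπce : IsGreedyWrt m γ Vstar πce)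
    -- `m` is a PRM of `mstar` w.r.t. `Π = {π_m^r, π_m^ce}` and `J`
    (hPRM : IsPRM m mstar γ {detPol πr, detPol πce})
    -- value functions of the two policies in `mstar`
    (Wr Wce : S → ℝ)
    (hWr : IsValueFun mstar γ (detPol πr) Wr)
    (hWce : IsValueFun mstar γ (detPol πce) Wce) :
    Jval mstar Wce ≥ Jval mstar Wr := by
  obtain ⟨Vr, hVr⟩ := exists_isValueFun m hγ0 hγ1 (detPol πr)
  have hVce : IsValueFun m γ (detPol πce) Vstar := hVstar.isValueFun_detPol m hπce
  have hJ : Jval m Vstar ≥ Jval m Vr := Jval_mono m (hVr.le_of_isOptValueFun m hγ0 hγ1 hVstar)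
  exact hPRM _ (Set.mem_insert_of_mem _ rfl) _ (Set.mem_insert _ _) Vstar Vr Wce Wr
    hVce hVr hWce hWr hJ

/-- **Proposition 2.** If `m` is a PRM of `m*` with respect to `Π = {π_m^r, π_m^ce}` and
`J`, then `J_{m*}^{π_m^ce} ≥ J_{m*}^{π_m^r}`. -/
theorem prm_ce_ge_rollout
    {S A : Type} [Fintype S] [Nonempty S] [Fintype A] [Nonempty A]
    (m mstar : MDP S A) (γ : ℝ) (hγ0 : 0 ≤ γ) (hγ1 : γ < 1)
    -- base policy and its value function in `m`
    (πb : S → PMF A) (Vb : S → ℝ) (hVb : IsValueFun m γ πb Vb)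
    -- rollout policy of `πb` in `m`
    (πr : S → A) (hπr : IsGreedyWrt m γ Vb πr)
    -- optimal value function of `m` and a certainty-equivalence policy in `m`
    (Vstar : S → ℝ) (hVstar : IsOptValueFun m γ Vstar)
    (πce : S → A) (hπce : IsGreedyWrt m γ Vstar πce)
    -- `m` is a PRM of `mstar` w.r.t. `Π = {π_m^r, π_m^ce}` and `J`
    (hPRM : IsPRM m mstar γ {detPol πr, detPol πce})
    -- value functions of the two policies in `mstar`
    (Wr Wce : S → ℝ)
    (hWr : IsValueFun mstar γ (detPol πr) Wr)
    (hWce : IsValueFun mstar γ (detPol πce) Wce) :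
    Jval mstar Wce ≥ Jval mstar Wr :=
  prm_ce_ge_rollout_general m mstar γ hγ0 hγ1 πr Vstar hVstar πce hπce hPRM Wr Wce hWr hWce
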